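/- The function g3(γ) = ln(1+γ) / ((γ²+2γ)·((γ²+2γ) − ln(1+γ))) is strictly decreasing on (0, ∞). -/

import Mathlib

/-!
With `q = γ² + 2γ` and `L = log (1 + γ)` one has `1 / g3 γ = q · (q / L - 1)`. Both factors are
positive and strictly increasing: `q / L = 2 · (e^{2L} - 1) / (2L)` is a secant slope of the strictly
convex function `exp` at `0`, hence increases with `L`, and `L < γ < q`.
-/

noncomputable def g3 (γ : ℝ) : ℝ :=
  Real.log (1 + γ) / ((γ ^ 2 + 2 * γ) * ((γ ^ 2 + 2 * γ) - Real.log (1 + γ)))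

open Real Set

lemma StrictMonoOn.mul_of_nonneg {α M₀ : Type*} [Preorder α] [MulZeroClass M₀] [Preorder M₀]
    [PosMulStrictMono M₀] [MulPosMono M₀] {f g : α → M₀} {s : Set α}
    (hf : StrictMonoOn f s) (hg : StrictMonoOn g s) (hf₀ : ∀ x ∈ s, 0 ≤ f x)
    (hg₀ : ∀ x ∈ s, 0 ≤ g x) : StrictMonoOn (fun x ↦ f x * g x) s :=
  fun _ hx _ hy h ↦ mul_lt_mul'' (hf hx hy h) (hg hx hy h) (hf₀ _ hx) (hg₀ _ hx)

lemma strictMonoOn_exp_sub_one_div : StrictMonoOn (fun t ↦ (exp t - 1) / t) (Ioi 0) := by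
  intro x hx y hy hxy
  simpa using strictConvexOn_exp.secant_strict_mono (mem_univ 0) (mem_univ x) (mem_univ y)
    hx.ne' hy.ne' hxy

lemma sq_add_two_mul_div_log_eq {γ : ℝ} (hγ : 0 < γ) :
    (γ ^ 2 + 2 * γ) / log (1 + γ) = 2 * ((exp (2 * log (1 + γ)) - 1) / (2 * log (1 + γ))) := by
  have hL : log (1 + γ) ≠ 0 := (log_pos (by linarith)).ne'
  rw [two_mul (log _), exp_add, exp_log (by linarith)]
  field_simp
  ring

lemma strictMonoOn_sq_add_two_mul_div_log :
    StrictMonoOn (fun γ ↦ (γ ^ 2 + 2 * γ) / log (1 + γ)) (Ioi 0) := by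
  intro x (hx : 0 < x) y (hy : 0 < y) hxy
  have hlog : 2 * log (1 + x) < 2 * log (1 + y) := by gcongr
  have hlog₀ : 0 < 2 * log (1 + x) := by have := log_pos (by linarith : 1 < 1 + x); positivity
  have hslope := strictMonoOn_exp_sub_one_div hlog₀ (hlog₀.trans hlog) hlog
  simp only [sq_add_two_mul_div_log_eq hx, sq_add_two_mul_div_log_eq hy]
  exact mul_lt_mul_of_pos_left hslope two_pos

lemma log_one_add_lt_sq_add_two_mul {γ : ℝ} (hγ : 0 < γ) : log (1 + γ) < γ ^ 2 + 2 * γ := by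
  have := log_lt_sub_one_of_pos (by linarith : 0 < 1 + γ) (by linarith)
  nlinarith

lemma g3_eq_inv {γ : ℝ} (hγ : 0 < γ) :
    g3 γ = ((γ ^ 2 + 2 * γ) * ((γ ^ 2 + 2 * γ) / log (1 + γ) - 1))⁻¹ := by
  have hL : 0 < log (1 + γ) := log_pos (by linarith)
  rw [g3, div_sub_one hL.ne', mul_div_assoc', inv_div]

/-- g₃ is strictly decreasing on (0, ∞). -/
theorem stmt_16 : StrictAntiOn g3 (Set.Ioi (0 : ℝ)) := by
  have hq : StrictMonoOn (fun γ : ℝ ↦ γ ^ 2 + 2 * γ) (Ioi 0) := fun x (hx : 0 < x) y _ hxy ↦ by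
    dsimp only; nlinarith
  have hr : StrictMonoOn (fun γ ↦ (γ ^ 2 + 2 * γ) / log (1 + γ) - 1) (Ioi 0) :=
    fun x hx y hy hxy ↦ sub_lt_sub_right (strictMonoOn_sq_add_two_mul_div_log hx hy hxy) 1
  have hr₀ : ∀ γ ∈ Ioi (0 : ℝ), 0 < (γ ^ 2 + 2 * γ) / log (1 + γ) - 1 := fun γ (hγ : 0 < γ) ↦ by
    rw [sub_pos, one_lt_div (log_pos (by linarith))]
    exact log_one_add_lt_sq_add_two_mul hγ
  have hprod := hq.mul_of_nonneg hr (fun γ (hγ : 0 < γ) ↦ by positivity) fun γ hγ ↦ (hr₀ γ hγ).le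
  refine (strictAntiOn_inv_pos.comp_strictMonoOn hprod fun γ (hγ : 0 < γ) ↦ ?_).congr
    fun γ hγ ↦ (g3_eq_inv hγ).symm
  exact mul_pos (by positivity) (hr₀ γ hγ)
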